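/- In Minkowski space M^{1,n}, let k be a nonzero null vector, z' ∈ M^{1,n}, A, A' ∈ ℝ, Z, Z' ∈ M^{1,n}, and define the affine Killing vector fields ζ_{A,Z}(x) = A k + ⟨k,z'⟩ Z + ⟨Z,x⟩ k − ⟨k,x⟩ Z. Then ζ_{A,Z} = ζ_{A',Z'} if and only if there exists a ∈ ℝ with Z' = Z + a k and A' = A − a⟨k,z'⟩. Consequently the space of such vector fields {ζ_{A,Z} : A ∈ ℝ, Z ∈ M^{1,n}} has dimension n+1. -/

import Mathlib

/-!
The kernel of `(A, Z) ↦ ζ_{A,Z}` is spanned by `(⟨k,z'⟩, -k)`: evaluating `ζ_{A,Z} = 0` at `x = 0`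
gives `A k + ⟨k,z'⟩ Z = 0`, and then at any `x` with `⟨k,x⟩ ≠ 0` (which exists by nondegeneracy)
gives `⟨Z,x⟩ k = ⟨k,x⟩ Z`, so `Z` is a multiple of `k`. Rank–nullity on the `(n + 2)`-dimensional
parameter space then gives dimension `n + 1`.
-/

/-- The linear map (A, Z) ↦ ζ_{A,Z}, where
ζ_{A,Z}(x) = A k + ⟨k,z'⟩ Z + ⟨Z,x⟩ k − ⟨k,x⟩ Z. -/
noncomputable def zetaMap {V : Type*} [AddCommGroup V] [Module ℝ V]
    (B : V →ₗ[ℝ] V →ₗ[ℝ] ℝ) (k z' : V) : (ℝ × V) →ₗ[ℝ] (V → V) where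
  toFun p := fun x => p.1 • k + (B k z') • p.2 + (B p.2 x) • k - (B k x) • p.2
  map_add' p p' := by
    funext x
    simp [add_smul, smul_add]
    abel
  map_smul' c p := by
    funext x
    simp [smul_smul, smul_sub, smul_add, mul_comm]

theorem LinearMap.BilinForm.nondegenerate_of_basis_diagonal {K V ι : Type*} [Field K]
    [AddCommGroup V] [Module K V] [DecidableEq ι] {B : LinearMap.BilinForm K V}
    (b : Module.Basis ι K V) (s : ι → K) (hs : ∀ i, s i ≠ 0)
    (hb : ∀ i j, B (b i) (b j) = if i = j then s i else 0) : B.Nondegenerate := by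
  have hortho : B.iIsOrtho b := fun i j hij => by simp [Function.onFun, hb, hij]
  exact (iIsOrtho.nondegenerate_iff_not_isOrtho_basis_self B b hortho).2 fun i => by simp [hb, hs]

section zetaMap

variable {V : Type*} [AddCommGroup V] [Module ℝ V] (B : V →ₗ[ℝ] V →ₗ[ℝ] ℝ) (k z' : V)

@[simp]
theorem zetaMap_apply (p : ℝ × V) (x : V) :
    zetaMap B k z' p x = p.1 • k + B k z' • p.2 + B p.2 x • k - B k x • p.2 :=
  rfl

theorem zetaMap_apply_neg_eq_zero : zetaMap B k z' (B k z', -k) = 0 := by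
  funext x
  simp only [zetaMap_apply, map_neg, LinearMap.neg_apply, Pi.zero_apply]
  module

variable {B k}

theorem ker_zetaMap (hk : B k ≠ 0) :
    LinearMap.ker (zetaMap B k z') = ℝ ∙ (B k z', -k) := by
  have hk0 : k ≠ 0 := ne_zero_of_map hk
  obtain ⟨x, hx⟩ : ∃ x, B k x ≠ 0 := by simpa [LinearMap.ext_iff] using hk
  refine le_antisymm ?_ ?_
  · rintro ⟨D, W⟩ hDW
    have hζ : ∀ y, D • k + B k z' • W + B W y • k - B k y • W = 0 := fun y =>
      congrFun (LinearMap.mem_ker.1 hDW) y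
    have hx0 : D • k + B k z' • W = 0 := by simpa using hζ 0
    have hW : W = (B W x / B k x) • k := by
      have hWx : B k x • W = B W x • k := by
        have := hζ x
        rw [add_sub_assoc, hx0, zero_add, sub_eq_zero] at this
        exact this.symm
      rw [div_eq_inv_mul, mul_smul, ← hWx, smul_smul, inv_mul_cancel₀ hx, one_smul]
    set a := B W x / B k x
    have hD : D = -a * B k z' := by
      refine smul_left_injective ℝ hk0 (show D • k = (-a * B k z') • k from ?_)
      rw [hW] at hx0
      linear_combination (norm := module) hx0
    refine Submodule.mem_span_singleton.2 ⟨-a, ?_⟩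
    ext <;> simp [hD, hW]
  · rw [Submodule.span_le, Set.singleton_subset_iff]
    exact zetaMap_apply_neg_eq_zero B k z'

theorem zetaMap_eq_zetaMap_iff (hk : B k ≠ 0) (A A' : ℝ) (Z Z' : V) :
    zetaMap B k z' (A, Z) = zetaMap B k z' (A', Z') ↔
      ∃ a : ℝ, Z' = Z + a • k ∧ A' = A - a * B k z' := by
  rw [← LinearMap.sub_mem_ker_iff, ker_zetaMap z' hk, Submodule.mem_span_singleton]
  constructor
  · rintro ⟨a, ha⟩
    obtain ⟨hA, hZ⟩ := Prod.ext_iff.1 ha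
    simp only [Prod.smul_fst, Prod.smul_snd, smul_eq_mul, Prod.fst_sub, Prod.snd_sub] at hA hZ
    exact ⟨a, by linear_combination (norm := module) hZ, by linarith⟩
  · rintro ⟨a, rfl, rfl⟩
    exact ⟨a, by ext <;> simp⟩

theorem finrank_range_zetaMap [FiniteDimensional ℝ V] (hk : B k ≠ 0) :
    Module.finrank ℝ (LinearMap.range (zetaMap B k z')) = Module.finrank ℝ V := by
  have hk0 : k ≠ 0 := ne_zero_of_map hk
  have hgen : ((B k z', -k) : ℝ × V) ≠ 0 := ne_of_apply_ne Prod.snd (by simpa using hk0)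
  have := LinearMap.finrank_range_add_finrank_ker (zetaMap B k z')
  rw [ker_zetaMap z' hk, finrank_span_singleton hgen, Module.finrank_prod,
    Module.finrank_self] at this
  omega

end zetaMap

theorem zeta_eq_iff_and_dim_general
    (n : ℕ) (V : Type*) [AddCommGroup V] [Module ℝ V]
    (B : V →ₗ[ℝ] V →ₗ[ℝ] ℝ)
    (b : Module.Basis (Fin 1 ⊕ Fin n) ℝ V)
    (hb : ∀ i j, B (b i) (b j) =
      if i = j then Sum.elim (fun _ => (-1 : ℝ)) (fun _ => (1 : ℝ)) i else 0)
    (k z' : V) (hk0 : k ≠ 0) :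
    (∀ (A A' : ℝ) (Z Z' : V),
      zetaMap B k z' (A, Z) = zetaMap B k z' (A', Z') ↔
        ∃ a : ℝ, Z' = Z + a • k ∧ A' = A - a * B k z') ∧
    Module.finrank ℝ (LinearMap.range (zetaMap B k z')) = n + 1 := by
  have : FiniteDimensional ℝ V := b.finiteDimensional_of_finite
  have hB : LinearMap.BilinForm.Nondegenerate B :=
    LinearMap.BilinForm.nondegenerate_of_basis_diagonal b _ (by rintro (_ | _) <;> simp) hb
  have hk : B k ≠ 0 := fun h => hk0 (hB.1 k fun y => by simp [h])
  refine ⟨zetaMap_eq_zetaMap_iff z' hk, ?_⟩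
  rw [finrank_range_zetaMap z' hk, Module.finrank_eq_card_basis b]
  simp [add_comm]

/-- In Minkowski space M^{1,n}, ζ_{A,Z} = ζ_{A',Z'} iff Z' = Z + a k and
A' = A − a⟨k,z'⟩ for some a ∈ ℝ; consequently the space of all such Killing
vector fields has dimension n + 1. -/
theorem zeta_eq_iff_and_dim
    (n : ℕ) (V : Type*) [AddCommGroup V] [Module ℝ V]
    (B : V →ₗ[ℝ] V →ₗ[ℝ] ℝ)
    (b : Module.Basis (Fin 1 ⊕ Fin n) ℝ V)
    (hb : ∀ i j, B (b i) (b j) =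
      if i = j then Sum.elim (fun _ => (-1 : ℝ)) (fun _ => (1 : ℝ)) i else 0)
    (k z' : V) (hk0 : k ≠ 0) (hknull : B k k = 0) :
    (∀ (A A' : ℝ) (Z Z' : V),
      zetaMap B k z' (A, Z) = zetaMap B k z' (A', Z') ↔
        ∃ a : ℝ, Z' = Z + a • k ∧ A' = A - a * B k z') ∧
    Module.finrank ℝ (LinearMap.range (zetaMap B k z')) = n + 1 :=
  zeta_eq_iff_and_dim_general n V B b hb k z' hk0
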